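/- Let Ω ⊂ ℝⁿ (n ≥ 2) be a bounded connected open set with C¹ boundary and v ∈ C²(Ω̄) with Δv = -1 in Ω and v = 0 on ∂Ω. If the P-function P = |∇v|² + (2/n)v, whose constant boundary value is c², satisfies P < c² throughout Ω, then the strict inequality c²|Ω| > (1 + 2/n)∫_Ω v dx holds. -/

import Mathlib

open Real Set MeasureTheory
open scoped RealInnerProductSpace

noncomputable def pd {n : ℕ} (i : Fin n) (f : EuclideanSpace ℝ (Fin n) → ℝ)
    (x : EuclideanSpace ℝ (Fin n)) : ℝ :=
  fderiv ℝ f x (EuclideanSpace.single i 1)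

noncomputable def lap {n : ℕ} (f : EuclideanSpace ℝ (Fin n) → ℝ)
    (x : EuclideanSpace ℝ (Fin n)) : ℝ :=
  ∑ i, pd i (pd i f) x

noncomputable def divg {n : ℕ} (F : EuclideanSpace ℝ (Fin n) → EuclideanSpace ℝ (Fin n))
    (x : EuclideanSpace ℝ (Fin n)) : ℝ :=
  ∑ i, pd i (fun y => F y i) x

lemma grad_coord {n : ℕ} (f : EuclideanSpace ℝ (Fin n) → ℝ) (y : EuclideanSpace ℝ (Fin n))
    (i : Fin n) : gradient f y i = pd i f y := by
  have h1 : ⟪gradient f y, EuclideanSpace.single i (1:ℝ)⟫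
      = fderiv ℝ f y (EuclideanSpace.single i 1) := InnerProductSpace.toDual_symm_apply
  have h2 : ⟪gradient f y, EuclideanSpace.single i (1:ℝ)⟫ = gradient f y i := by
    simp only [EuclideanSpace.inner_single_right]; simp
  rw [pd, ← h1, h2]

lemma divg_v_grad {n : ℕ} (v : EuclideanSpace ℝ (Fin n) → ℝ) (x : EuclideanSpace ℝ (Fin n))
    (hvx : ContDiffAt ℝ 2 v x) :
    divg (fun y => v y • gradient v y) x = ‖gradient v x‖ ^ 2 + v x * lap v x := by
  have hvd : DifferentiableAt ℝ v x := hvx.differentiableAt (by norm_num)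
  have hfc : ContDiffAt ℝ 1 (fderiv ℝ v) x := hvx.fderiv_right (by norm_num)
  have key : ∀ i : Fin n, pd i (fun y => (fun y => v y • gradient v y) y i) x
      = pd i v x * pd i v x + v x * pd i (pd i v) x := by
    intro i
    have hco : (fun y => (fun y => v y • gradient v y) y i) = fun y => v y * pd i v y := by
      funext y
      simp [grad_coord, PiLp.smul_apply, smul_eq_mul]
    have hwd : DifferentiableAt ℝ (fun y => pd i v y) x := by
      have : DifferentiableAt ℝ (fun y => (fderiv ℝ v y) (EuclideanSpace.single i 1)) x :=
        (hfc.differentiableAt one_ne_zero).clm_apply (differentiableAt_const _)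
      exact this
    rw [hco, pd, fderiv_fun_mul hvd hwd]
    simp only [ContinuousLinearMap.add_apply, ContinuousLinearMap.smul_apply, smul_eq_mul]
    rw [pd, pd]
    ring
  have hnorm : ‖gradient v x‖ ^ 2 = ∑ i, pd i v x * pd i v x := by
    rw [← real_inner_self_eq_norm_sq, PiLp.inner_apply]
    simp [grad_coord, sq]
  rw [divg]
  simp_rw [key]
  rw [Finset.sum_add_distrib, ← Finset.mul_sum, ← lap, hnorm]

lemma cdo_v_grad {n : ℕ} (Ω : Set (EuclideanSpace ℝ (Fin n))) (hΩo : IsOpen Ω)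
    (v : EuclideanSpace ℝ (Fin n) → ℝ) (hv : ContDiffOn ℝ 2 v (closure Ω))
    (hbdry : ∀ x ∈ frontier Ω, v x = 0) :
    ContDiffOn ℝ 1 (fun y => v y • gradient v y) (closure Ω) := by
  intro x hx
  have hv2 : ContDiffWithinAt ℝ (1 + 1) v (closure Ω) x := by
    exact_mod_cast (hv x hx).of_le (by norm_num)
  rw [contDiffWithinAt_succ_iff_hasFDerivWithinAt (by simp)] at hv2
  obtain ⟨u, hu, -, f', hf'd, hf'c⟩ := hv2
  rw [insert_eq_self.mpr hx] at hu
  obtain ⟨w, hw_open, hxw, hsw⟩ := mem_nhdsWithin.mp hu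
  set g : EuclideanSpace ℝ (Fin n) → EuclideanSpace ℝ (Fin n) :=
    fun y => v y • (InnerProductSpace.toDual ℝ (EuclideanSpace ℝ (Fin n))).symm (f' y) with hg
  have hgc : ContDiffWithinAt ℝ 1 g (w ∩ closure Ω) x := by
    have h1 : ContDiffWithinAt ℝ 1 v (w ∩ closure Ω) x :=
      ((hv x hx).of_le (by norm_num)).mono inter_subset_right
    have h2 : ContDiffWithinAt ℝ 1 f' (w ∩ closure Ω) x := hf'c.mono hsw
    have h3 : ContDiffWithinAt ℝ 1
        (fun y => (InnerProductSpace.toDual ℝ (EuclideanSpace ℝ (Fin n))).symm (f' y))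
        (w ∩ closure Ω) x :=
      (InnerProductSpace.toDual ℝ (EuclideanSpace ℝ (Fin n))).symm.contDiff.comp_contDiffWithinAt h2
    exact h1.smul h3
  have heqon : EqOn (fun y => v y • gradient v y) g (w ∩ closure Ω) := by
    rintro y ⟨hyw, hys⟩
    by_cases hyΩ : y ∈ Ω
    · have hmem : u ∈ nhds y := by
        refine Filter.mem_of_superset ((hw_open.inter hΩo).mem_nhds ⟨hyw, hyΩ⟩) ?_
        exact fun z hz => hsw ⟨hz.1, subset_closure hz.2⟩
      have := ((hf'd y (hsw ⟨hyw, hys⟩)).hasFDerivAt hmem).fderiv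
      simp only [g, gradient, this]
    · have hyf : y ∈ frontier Ω := by
        rw [frontier, hΩo.interior_eq]; exact ⟨hys, hyΩ⟩
      simp [g, hbdry y hyf]
  have hfin : ContDiffWithinAt ℝ 1 (fun y => v y • gradient v y) (w ∩ closure Ω) x :=
    hgc.congr heqon (heqon ⟨hxw, hx⟩)
  rw [inter_comm] at hfin
  exact (contDiffWithinAt_inter (hw_open.mem_nhds hxw)).mp hfin

/-- With `Ω ⊆ ℝⁿ` (`n ≥ 2`) bounded connected open with C¹ boundary
(encoded via the divergence theorem for a surface measure `σ` and unit normal `ν`),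
`v ∈ C²(Ω̄)` with `Δv = -1` in `Ω`, `v = 0` and `|∇v| = c` on `∂Ω`: if the P-function
`P = |∇v|² + (2/n) v` satisfies `P < c²` throughout `Ω`, then the strict inequality
`c² |Ω| > (1 + 2/n) ∫_Ω v dx` holds. -/
theorem strict_inequality_from_P_below
    (n : ℕ) (hn : 2 ≤ n) (Ω : Set (EuclideanSpace ℝ (Fin n)))
    (hΩo : IsOpen Ω) (hΩc : IsConnected Ω) (hΩb : Bornology.IsBounded Ω)
    (σ : Measure (EuclideanSpace ℝ (Fin n))) (ν : EuclideanSpace ℝ (Fin n) → EuclideanSpace ℝ (Fin n))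
    (hν : ∀ x ∈ frontier Ω, ‖ν x‖ = 1)
    (hdivthm : ∀ F : EuclideanSpace ℝ (Fin n) → EuclideanSpace ℝ (Fin n),
      ContDiffOn ℝ 1 F (closure Ω) →
      ∫ x in Ω, divg F x = ∫ x in frontier Ω, ⟪F x, ν x⟫ ∂σ)
    (v : EuclideanSpace ℝ (Fin n) → ℝ) (hv : ContDiffOn ℝ 2 v (closure Ω))
    (heq : ∀ x ∈ Ω, lap v x = -1)
    (hbdry : ∀ x ∈ frontier Ω, v x = 0)
    (c : ℝ) (hc : 0 < c)
    (hneu : ∀ x ∈ frontier Ω, ‖gradient v x‖ = c)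
    (hPlt : ∀ x ∈ Ω, ‖gradient v x‖ ^ 2 + (2 / n) * v x < c ^ 2) :
    c ^ 2 * (volume Ω).toReal > (1 + 2 / n) * ∫ x in Ω, v x := by
  -- basic facts
  have hne : Ω.Nonempty := hΩc.nonempty
  have hKcl : IsCompact (closure Ω) := hΩb.isCompact_closure
  have hvolpos : 0 < volume Ω := hΩo.measure_pos volume hne
  have hvolfin : volume Ω < ⊤ :=
    lt_of_le_of_lt (measure_mono subset_closure) hKcl.measure_lt_top
  have hvc : ContinuousOn v (closure Ω) := hv.continuousOn
  have hvint : IntegrableOn v Ω volume :=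
    (hvc.integrableOn_compact hKcl).mono_set subset_closure
  -- measurability and integrability of |∇v|²
  have hgradmeas : Measurable (fun x => ‖gradient v x‖ ^ 2) := by
    have h1 : Measurable (gradient v) :=
      ((InnerProductSpace.toDual ℝ (EuclideanSpace ℝ (Fin n))).symm.continuous.measurable).comp
        (measurable_fderiv ℝ v)
    exact (h1.norm.pow_const 2)
  obtain ⟨M, hM⟩ := hKcl.exists_bound_of_continuousOn hvc
  have h2n : (0:ℝ) ≤ 2 / n := by positivity
  have hgbd : ∀ x ∈ Ω, ‖gradient v x‖ ^ 2 ≤ c ^ 2 + (2 / n) * M := by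
    intro x hx
    have h1 := hPlt x hx
    have h2 : |v x| ≤ M := by
      have := hM x (subset_closure hx); rwa [Real.norm_eq_abs] at this
    nlinarith [abs_le.mp h2, abs_nonneg (v x)]
  have hconst : IntegrableOn (fun _ => c ^ 2 + (2 / n) * M) Ω volume :=
    integrableOn_const hvolfin.ne
  have hgint : IntegrableOn (fun x => ‖gradient v x‖ ^ 2) Ω volume := by
    refine Integrable.mono' hconst hgradmeas.aestronglyMeasurable ?_
    rw [ae_restrict_iff' hΩo.measurableSet]
    filter_upwards with x hx
    rw [Real.norm_eq_abs, abs_of_nonneg (by positivity)]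
    exact hgbd x hx
  -- divergence theorem applied to F = v • ∇v
  set F : EuclideanSpace ℝ (Fin n) → EuclideanSpace ℝ (Fin n) :=
    fun y => v y • gradient v y with hF
  have hFc : ContDiffOn ℝ 1 F (closure Ω) := cdo_v_grad Ω hΩo v hv hbdry
  have hdiv := hdivthm F hFc
  have hrhs : ∫ x in frontier Ω, ⟪F x, ν x⟫ ∂σ = 0 := by
    refine setIntegral_eq_zero_of_forall_eq_zero fun x hx => ?_
    simp [F, hbdry x hx]
  have hlhs : ∀ x ∈ Ω, divg F x = ‖gradient v x‖ ^ 2 - v x := by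
    intro x hx
    have hvx : ContDiffAt ℝ 2 v x :=
      hv.contDiffAt (mem_nhds_iff.mpr ⟨Ω, subset_closure, hΩo, hx⟩)
    rw [divg_v_grad v x hvx, heq x hx]
    ring
  have hkey : ∫ x in Ω, ‖gradient v x‖ ^ 2 = ∫ x in Ω, v x := by
    have h1 : ∫ x in Ω, divg F x = ∫ x in Ω, (‖gradient v x‖ ^ 2 - v x) :=
      setIntegral_congr_fun hΩo.measurableSet hlhs
    rw [hdiv, hrhs] at h1
    have h2 : ∫ x in Ω, (‖gradient v x‖ ^ 2 - v x)
        = (∫ x in Ω, ‖gradient v x‖ ^ 2) - ∫ x in Ω, v x := integral_sub hgint hvint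
    rw [h2] at h1
    linarith
  -- strict integral inequality
  set h : EuclideanSpace ℝ (Fin n) → ℝ :=
    fun x => c ^ 2 - (‖gradient v x‖ ^ 2 + (2 / n) * v x) with hhdef
  have hhint : IntegrableOn h Ω volume := by
    apply Integrable.sub (integrableOn_const (C := c ^ 2) hvolfin.ne)
    exact hgint.add (hvint.const_mul _)
  have hhpos : ∀ x ∈ Ω, 0 < h x := fun x hx => by
    simp only [hhdef]; linarith [hPlt x hx]
  have hintpos : 0 < ∫ x in Ω, h x := by
    rw [setIntegral_pos_iff_support_of_nonneg_ae ?_ hhint]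
    · refine lt_of_lt_of_le hvolpos (measure_mono fun x hx => ?_)
      exact ⟨ne_of_gt (hhpos x hx), hx⟩
    · exact (ae_restrict_iff' hΩo.measurableSet).mpr
        (Filter.Eventually.of_forall fun x hx => (hhpos x hx).le)
  have hc2 : IntegrableOn (fun _ => c ^ 2) Ω volume := integrableOn_const hvolfin.ne
  have hsum : IntegrableOn (fun x => ‖gradient v x‖ ^ 2 + (2 / n) * v x) Ω volume :=
    hgint.add (hvint.const_mul _)
  have hexp : ∫ x in Ω, h x
      = c ^ 2 * (volume Ω).toReal - ((∫ x in Ω, ‖gradient v x‖ ^ 2) + (2 / n) * ∫ x in Ω, v x) := by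
    have e1 : ∫ x in Ω, h x
        = (∫ _x in Ω, c ^ 2) - ∫ x in Ω, (‖gradient v x‖ ^ 2 + (2 / n) * v x) :=
      integral_sub hc2 hsum
    have e2 : ∫ x in Ω, (‖gradient v x‖ ^ 2 + (2 / n) * v x)
        = (∫ x in Ω, ‖gradient v x‖ ^ 2) + (2 / n) * ∫ x in Ω, v x := by
      rw [integral_add hgint (hvint.const_mul _), MeasureTheory.integral_const_mul]
    rw [e1, e2, setIntegral_const, smul_eq_mul, mul_comm, measureReal_def]
  rw [hexp, hkey] at hintpos
  linarith
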